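/- Assume (A1) and (A3), and fix t ∈ {0,1}. Let λ† : 𝒳 → [ε, 1−ε] be measurable and τ† : 𝒳 → ℝ be bounded measurable. Then the remainder term of the one-step expansion satisfies the second-order identity E[ R·1{T=t}·Y / (λ†(X)·π_{t1}) + (1 − R·1{T=t} / (λ†(X)·π_{t1}))·τ†(X) ] − μ_t = E[ ( λ₁(X)/λ†(X) − 1 )·( τ_t(1,X) − τ†(X) ) ]. -/

import Mathlib

/-!
Write `p = P(R = 1 | X)`, `k = 1 / λ†(X)` and `g = E[Y_t | R = 1, X]`. By (A1) the treatment
indicator factors out of the weighted term, so the left side equals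
`E[1{R=1} k (Y_t - τ†)] + E[τ†] - E[Y_t]`. On the right, `p k - 1 = p (k - 1/p)` almost surely,
and for `X`-measurable `φ` we have `E[p φ] = E[1{R=1} φ]`; on `{R = 1}` the factor `g` may then be
replaced by `Y_t`. What is left is `E[1{R=1} p⁻¹ (Y_t - τ†)] = E[Y_t - τ†]`, the inverse probability
weighting identity, which holds because (A3) gives `E[1{R=1} Y_t | X] = p E[Y_t | X]`.
-/

open MeasureTheory ProbabilityTheory Set

noncomputable section

/-- The σ-algebra on `Ω` generated by the map `X`. -/
def sigmaX {Ω 𝒳 : Type*} [MeasurableSpace 𝒳] (X : Ω → 𝒳) : MeasurableSpace Ω :=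
  MeasurableSpace.comap X inferInstance

/-- Conditional expectation of `f` given the σ-algebra `m'` under the measure `μ`. -/
def cexp {Ω : Type*} (m' : MeasurableSpace Ω) {m0 : MeasurableSpace Ω} (μ : Measure Ω)
    (f : Ω → ℝ) : Ω → ℝ :=
  MeasureTheory.condExp m' μ f

/-- Conditional probability of the event `s` given the σ-algebra `m'`, as a function. -/
def cprob {Ω : Type*} (m' : MeasurableSpace Ω) {m0 : MeasurableSpace Ω} (μ : Measure Ω)
    (s : Set Ω) : Ω → ℝ :=
  cexp m' μ (s.indicator fun _ => (1 : ℝ))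

/-- `f` and `g` are conditionally independent given the σ-algebra `m'` under `μ` :
conditional probabilities of joint events factorize. -/
def CondIndepFunGiven {Ω β γ : Type*} [MeasurableSpace β]
    [MeasurableSpace γ] (m' : MeasurableSpace Ω) {m0 : MeasurableSpace Ω}
    (f : Ω → β) (g : Ω → γ) (μ : Measure Ω) : Prop :=
  ∀ s u, MeasurableSet s → MeasurableSet u →
    cprob m' μ (f ⁻¹' s ∩ g ⁻¹' u)
      =ᵐ[μ] fun ω => cprob m' μ (f ⁻¹' s) ω * cprob m' μ (g ⁻¹' u) ω

theorem norm_inv_le_inv_of_le {ε x : ℝ} (hε : 0 < ε) (h : ε ≤ x) : ‖x⁻¹‖ ≤ ε⁻¹ := by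
  rw [norm_inv, Real.norm_of_nonneg (hε.le.trans h)]
  exact inv_anti₀ hε h

namespace ProbabilityTheory

variable {Ω : Type*} {m0 : MeasurableSpace Ω} {μ : Measure Ω} {s : Set Ω}

theorem restrict_eq_smul_cond (hs : μ s ≠ ⊤) : μ.restrict s = μ s • μ[|s] := by
  by_cases h0 : μ s = 0
  · simp [Measure.restrict_eq_zero.2 h0, h0]
  · rw [cond, smul_smul, ENNReal.mul_inv_cancel h0 hs, one_smul]

theorem setIntegral_eq_measureReal_mul_integral_cond (hs : μ s ≠ ⊤) (f : Ω → ℝ) :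
    ∫ ω in s, f ω ∂μ = μ.real s * ∫ ω, f ω ∂μ[|s] := by
  rw [restrict_eq_smul_cond hs, integral_smul_measure]
  rfl

theorem _root_.MeasureTheory.Integrable.cond {f : Ω → ℝ} (hf : Integrable f μ) :
    Integrable f μ[|s] := by
  by_cases h0 : μ s = 0
  · simp [cond_eq_zero_of_meas_eq_zero h0]
  · exact hf.restrict.smul_measure (ENNReal.inv_ne_top.2 h0)

theorem _root_.MeasureTheory.Integrable.integrableOn_of_cond {f : Ω → ℝ}
    (hf : Integrable f μ[|s]) (hs : μ s ≠ ⊤) : IntegrableOn f s μ := by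
  rw [IntegrableOn, restrict_eq_smul_cond hs]
  exact hf.smul_measure hs

theorem setIntegral_ite_mul_comp_of_indepFun_cond [IsFiniteMeasure μ] {𝓦 : Type*}
    [MeasurableSpace 𝓦] {T : Ω → ℝ} {W : Ω → 𝓦} (hTW : IndepFun T W μ[|s]) (hT : Measurable T)
    (hW : Measurable W) {g : 𝓦 → ℝ} (hg : Measurable g) (t : ℝ) :
    ∫ ω in s, (if T ω = t then 1 else 0) * g (W ω) ∂μ
      = (μ[|s] {ω | T ω = t}).toReal * ∫ ω in s, g (W ω) ∂μ := by
  have hI : ∫ ω, (if T ω = t then (1 : ℝ) else 0) ∂μ[|s] = (μ[|s] {ω | T ω = t}).toReal := by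
    have hTt : MeasurableSet {ω | T ω = t} := hT (measurableSet_singleton t)
    rw [← measureReal_def, ← integral_indicator_one hTt]
    congr 1 with ω
  simp only [setIntegral_eq_measureReal_mul_integral_cond (measure_ne_top μ s), ← hI]
  rw [← mul_left_comm]
  exact congrArg _ (hTW.integral_comp_mul_comp (f := fun x => if x = t then (1 : ℝ) else 0)
    hT.aemeasurable hW.aemeasurable
    (measurable_const.ite (measurableSet_singleton t) measurable_const).aestronglyMeasurable
    hg.aestronglyMeasurable)

end ProbabilityTheory

namespace MeasureTheory

variable {Ω : Type*} {m m0 : MeasurableSpace Ω} {μ : Measure Ω}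

theorem setIntegral_mul_condExp (hm : m ≤ m0) [SigmaFinite (μ.trim hm)] {φ f : Ω → ℝ}
    (hφ : StronglyMeasurable[m] φ) (hφf : Integrable (φ * f) μ) (hf : Integrable f μ)
    {s : Set Ω} (hs : MeasurableSet[m] s) :
    ∫ ω in s, φ ω * μ[f|m] ω ∂μ = ∫ ω in s, φ ω * f ω ∂μ :=
  calc ∫ ω in s, φ ω * μ[f|m] ω ∂μ = ∫ ω in s, μ[φ * f|m] ω ∂μ :=
        setIntegral_congr_ae (hm s hs) <|
          (condExp_mul_of_stronglyMeasurable_left hφ hφf hf).mono fun _ h _ => h.symm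
    _ = ∫ ω in s, φ ω * f ω ∂μ := setIntegral_condExp hm hφf hs

theorem integral_mul_condExp (hm : m ≤ m0) [SigmaFinite (μ.trim hm)] {φ f : Ω → ℝ}
    (hφ : StronglyMeasurable[m] φ) (hφf : Integrable (φ * f) μ) (hf : Integrable f μ) :
    ∫ ω, φ ω * μ[f|m] ω ∂μ = ∫ ω, φ ω * f ω ∂μ := by
  simpa using setIntegral_mul_condExp hm hφ hφf hf MeasurableSet.univ

theorem setIntegral_comp_eq_integral_mul_comp [IsFiniteMeasure μ] {β : Type*}
    [MeasurableSpace β] {B : Set Ω} {Z : Ω → β} (hZ : Measurable Z) {w : Ω → ℝ}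
    (hwm : Measurable w) (hw : Integrable w μ) (hw0 : 0 ≤ᵐ[μ] w)
    (hBZ : ∀ u, MeasurableSet u → μ.real (B ∩ Z ⁻¹' u) = ∫ ω in Z ⁻¹' u, w ω ∂μ)
    {ζ : β → ℝ} (hζ : Measurable ζ) :
    ∫ ω in B, ζ (Z ω) ∂μ = ∫ ω, w ω * ζ (Z ω) ∂μ := by
  have hmap : (μ.restrict B).map Z = (μ.withDensity fun ω => ENNReal.ofReal (w ω)).map Z := by
    ext u hu
    rw [Measure.map_apply hZ hu, Measure.map_apply hZ hu, Measure.restrict_apply (hZ hu),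
      withDensity_apply _ (hZ hu), ← ofReal_integral_eq_lintegral_ofReal hw.integrableOn
      (ae_restrict_of_ae hw0), ← hBZ u hu, inter_comm, ofReal_measureReal]
  calc ∫ ω in B, ζ (Z ω) ∂μ
      = ∫ ω, ζ (Z ω) ∂(μ.withDensity fun ω => ENNReal.ofReal (w ω)) := by
        rw [← integral_map hZ.aemeasurable hζ.aestronglyMeasurable, hmap,
          integral_map hZ.aemeasurable hζ.aestronglyMeasurable]
    _ = ∫ ω, w ω * ζ (Z ω) ∂μ := by
        rw [integral_withDensity_eq_integral_toReal_smul hwm.ennreal_ofReal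
          (ae_of_all _ fun _ => ENNReal.ofReal_lt_top)]
        refine integral_congr_ae ?_
        filter_upwards [hw0] with ω hω
        simp [ENNReal.toReal_ofReal hω]

end MeasureTheory

section ConditionalProbability

variable {Ω : Type*} {m m0 : MeasurableSpace Ω} {μ : Measure Ω}

theorem setIntegral_cprob (hm : m ≤ m0) [IsFiniteMeasure μ] {s t : Set Ω}
    (hs : MeasurableSet[m] s) (ht : MeasurableSet t) :
    ∫ ω in s, cprob m μ t ω ∂μ = μ.real (t ∩ s) := by
  rw [cprob, cexp, setIntegral_condExp hm ((integrable_const 1).indicator ht) hs,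
    integral_indicator_const _ ht, measureReal_restrict_apply ht, smul_eq_mul, mul_one]

theorem abs_cprob_le_one (s : Set Ω) : ∀ᵐ ω ∂μ, |cprob m μ s ω| ≤ 1 :=
  ae_bdd_abs_condExp_of_ae_bdd_abs <| ae_of_all _ fun ω => by
    by_cases hω : ω ∈ s <;> simp [hω]

theorem integral_cprob_mul (hm : m ≤ m0) [IsFiniteMeasure μ] {B : Set Ω}
    (hB : MeasurableSet B) {φ : Ω → ℝ} (hφ : StronglyMeasurable[m] φ) (hφB : IntegrableOn φ B μ) :
    ∫ ω, cprob m μ B ω * φ ω ∂μ = ∫ ω in B, φ ω ∂μ := by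
  have hφ1 : φ * B.indicator (fun _ => (1 : ℝ)) = B.indicator φ := by
    ext ω; by_cases hω : ω ∈ B <;> simp [hω]
  simp_rw [mul_comm (cprob m μ B _)]
  rw [cprob, cexp, integral_mul_condExp hm hφ (hφ1 ▸ hφB.integrable_indicator hB)
    ((integrable_const 1).indicator hB), ← integral_indicator hB]
  exact congrArg (integral μ) hφ1

theorem le_measureReal_of_ae_le_cprob (hm : m ≤ m0) [IsProbabilityMeasure μ] {s : Set Ω}
    (hs : MeasurableSet s) {ε : ℝ} (h : ∀ᵐ ω ∂μ, ε ≤ cprob m μ s ω) : ε ≤ μ.real s :=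
  calc ε = ∫ _, ε ∂μ := by simp
    _ ≤ ∫ ω, cprob m μ s ω ∂μ := integral_mono_ae (integrable_const ε) integrable_condExp h
    _ = μ.real s := by simpa using setIntegral_cprob hm MeasurableSet.univ hs

/-- `CondIndepFunGiven` only factorizes conditional probabilities of events. On each
`m`-measurable `s` it identifies the law of `Z` on `R ⁻¹' a ∩ s` with its law on `s` under the
density `cprob m μ (R ⁻¹' a)`, and this carries the factorization over to `ζ ∘ Z`. -/
theorem condExp_indicator_comp_ae_eq (hm : m ≤ m0) [IsFiniteMeasure μ] {α β : Type*}
    [MeasurableSpace α] [MeasurableSpace β] {R : Ω → α} {Z : Ω → β} (hR : Measurable R)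
    (hZ : Measurable Z) (hRZ : CondIndepFunGiven m R Z μ) {a : Set α} (ha : MeasurableSet a)
    {ζ : β → ℝ} (hζ : Measurable ζ) (hζZ : Integrable (ζ ∘ Z) μ) :
    μ[(R ⁻¹' a).indicator (ζ ∘ Z)|m] =ᵐ[μ] cprob m μ (R ⁻¹' a) * μ[ζ ∘ Z|m] := by
  set B := R ⁻¹' a
  have hB : MeasurableSet B := hR ha
  have hp : StronglyMeasurable[m] (cprob m μ B) := stronglyMeasurable_condExp
  have hp0 : 0 ≤ᵐ[μ] cprob m μ B :=
    condExp_nonneg (ae_of_all _ fun ω => Set.indicator_nonneg (fun _ _ => zero_le_one) ω)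
  have hpZ : Integrable (cprob m μ B * (ζ ∘ Z)) μ :=
    hζZ.bdd_mul (c := 1) (hp.mono hm).aestronglyMeasurable (abs_cprob_le_one B)
  refine (ae_eq_condExp_of_forall_setIntegral_eq hm (hζZ.indicator hB)
    (fun s _ _ => (integrable_condExp.bdd_mul (c := 1) (hp.mono hm).aestronglyMeasurable
      (abs_cprob_le_one B)).integrableOn) (fun s hs _ => ?_)
    (hp.mul stronglyMeasurable_condExp).aestronglyMeasurable).symm
  have hBZ : ∀ u, MeasurableSet u →
      (μ.restrict s).real (B ∩ Z ⁻¹' u) = ∫ ω in Z ⁻¹' u, cprob m μ B ω ∂μ.restrict s := by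
    intro u hu
    have hZu : MeasurableSet (Z ⁻¹' u) := hZ hu
    calc (μ.restrict s).real (B ∩ Z ⁻¹' u)
        = ∫ ω in s, cprob m μ (B ∩ Z ⁻¹' u) ω ∂μ := by
          rw [measureReal_restrict_apply (hB.inter hZu),
            setIntegral_cprob hm hs (hB.inter hZu)]
      _ = ∫ ω in s, cprob m μ B ω * cprob m μ (Z ⁻¹' u) ω ∂μ :=
          setIntegral_congr_ae (hm s hs) ((hRZ a u ha hu).mono fun _ h _ => h)
      _ = ∫ ω in s, cprob m μ B ω * (Z ⁻¹' u).indicator (fun _ => (1 : ℝ)) ω ∂μ :=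
          setIntegral_mul_condExp hm hp
            (((integrable_const 1).indicator hZu).bdd_mul (c := 1)
              (hp.mono hm).aestronglyMeasurable (abs_cprob_le_one B))
            ((integrable_const 1).indicator hZu) hs
      _ = ∫ ω in Z ⁻¹' u, cprob m μ B ω ∂μ.restrict s := by
          rw [← integral_indicator hZu]
          congr 1 with ω
          by_cases hω : ω ∈ Z ⁻¹' u <;> simp [hω]
  rw [setIntegral_mul_condExp hm hp hpZ hζZ hs, integral_indicator hB]
  exact (setIntegral_comp_eq_integral_mul_comp hZ (hp.mono hm).measurable
    integrable_condExp.restrict (ae_restrict_of_ae hp0) hBZ hζ).symm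

theorem setIntegral_inv_cprob_mul (hm : m ≤ m0) [IsFiniteMeasure μ] {B : Set Ω}
    (hB : MeasurableSet B) {ε : ℝ} (hε : 0 < ε) (hp : ∀ᵐ ω ∂μ, ε ≤ cprob m μ B ω)
    {F : Ω → ℝ} (hF : Integrable F μ)
    (hFB : μ[B.indicator F|m] =ᵐ[μ] cprob m μ B * μ[F|m]) :
    ∫ ω in B, (cprob m μ B ω)⁻¹ * F ω ∂μ = ∫ ω, F ω ∂μ := by
  have hinv : StronglyMeasurable[m] fun ω => (cprob m μ B ω)⁻¹ :=
    (stronglyMeasurable_condExp (m := m)).measurable.inv.stronglyMeasurable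
  have hinvF : Integrable (fun ω => (cprob m μ B ω)⁻¹ * B.indicator F ω) μ :=
    (hF.indicator hB).bdd_mul (c := ε⁻¹) (hinv.mono hm).aestronglyMeasurable
      (hp.mono fun _ h => norm_inv_le_inv_of_le hε h)
  calc ∫ ω in B, (cprob m μ B ω)⁻¹ * F ω ∂μ
      = ∫ ω, (cprob m μ B ω)⁻¹ * B.indicator F ω ∂μ := by
        rw [← integral_indicator hB]
        congr 1 with ω
        by_cases hω : ω ∈ B <;> simp [hω]
    _ = ∫ ω, (cprob m μ B ω)⁻¹ * μ[B.indicator F|m] ω ∂μ :=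
        (integral_mul_condExp hm hinv hinvF (hF.indicator hB)).symm
    _ = ∫ ω, μ[F|m] ω ∂μ := by
        refine integral_congr_ae ?_
        filter_upwards [hFB, hp] with ω hω hεω
        rw [hω, Pi.mul_apply, inv_mul_cancel_left₀ (hε.trans_le hεω).ne']
    _ = ∫ ω, F ω ∂μ := integral_condExp hm

theorem integral_cprob_mul_mul_cexp_cond_sub (hm : m ≤ m0) [IsFiniteMeasure μ] {B : Set Ω}
    (hB : MeasurableSet B) {φ : Ω → ℝ} (hφ : StronglyMeasurable[m] φ) {C : ℝ}
    (hφC : ∀ᵐ ω ∂μ, ‖φ ω‖ ≤ C) {Y τ : Ω → ℝ} (hY : Integrable Y μ)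
    (hτ : StronglyMeasurable[m] τ) (hτi : Integrable τ μ) :
    ∫ ω, cprob m μ B ω * (φ ω * (cexp m μ[|B] Y ω - τ ω)) ∂μ
      = ∫ ω in B, φ ω * (Y ω - τ ω) ∂μ := by
  have hφCB : ∀ᵐ ω ∂μ[|B], ‖φ ω‖ ≤ C := cond_absolutelyContinuous.ae_le hφC
  have hcexp : μ[|B][Y - τ|m] =ᵐ[μ[|B]] cexp m μ[|B] Y - τ :=
    (condExp_sub hY.cond hτi.cond m).trans <| by
      rw [condExp_of_stronglyMeasurable hm hτ hτi.cond]
      rfl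
  have hg : Integrable (fun ω => φ ω * (cexp m μ[|B] Y ω - τ ω)) μ[|B] :=
    (integrable_condExp.sub hτi.cond).bdd_mul (c := C) (hφ.mono hm).aestronglyMeasurable hφCB
  calc ∫ ω, cprob m μ B ω * (φ ω * (cexp m μ[|B] Y ω - τ ω)) ∂μ
      = ∫ ω in B, φ ω * (cexp m μ[|B] Y ω - τ ω) ∂μ :=
        integral_cprob_mul hm hB (hφ.mul (stronglyMeasurable_condExp.sub hτ))
          (hg.integrableOn_of_cond (measure_ne_top μ B))
    _ = μ.real B * ∫ ω, φ ω * μ[|B][Y - τ|m] ω ∂μ[|B] := by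
        rw [setIntegral_eq_measureReal_mul_integral_cond (measure_ne_top μ B)]
        congr 1
        exact integral_congr_ae (hcexp.mono fun ω h => by simp only [h, Pi.sub_apply])
    _ = μ.real B * ∫ ω, φ ω * (Y ω - τ ω) ∂μ[|B] := by
        rw [integral_mul_condExp hm hφ (((hY.sub hτi).cond).bdd_mul (c := C)
          (hφ.mono hm).aestronglyMeasurable hφCB) (hY.sub hτi).cond]
        rfl
    _ = ∫ ω in B, φ ω * (Y ω - τ ω) ∂μ :=
        (setIntegral_eq_measureReal_mul_integral_cond (measure_ne_top μ B) _).symm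

theorem integral_cprob_mul_sub_one_mul_cexp_cond_sub (hm : m ≤ m0) [IsFiniteMeasure μ]
    {B : Set Ω} (hB : MeasurableSet B) {ε : ℝ} (hε : 0 < ε) (hp : ∀ᵐ ω ∂μ, ε ≤ cprob m μ B ω)
    {k : Ω → ℝ} (hk : StronglyMeasurable[m] k) {C : ℝ} (hkC : ∀ᵐ ω ∂μ, ‖k ω‖ ≤ C)
    {Y τ : Ω → ℝ} (hY : Integrable Y μ) (hYB : μ[B.indicator Y|m] =ᵐ[μ] cprob m μ B * μ[Y|m])
    (hτ : StronglyMeasurable[m] τ) (hτi : Integrable τ μ) :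
    ∫ ω, (cprob m μ B ω * k ω - 1) * (cexp m μ[|B] Y ω - τ ω) ∂μ
      = ∫ ω in B, k ω * (Y ω - τ ω) ∂μ - ∫ ω, (Y ω - τ ω) ∂μ := by
  set p := cprob m μ B
  have hinv : StronglyMeasurable[m] fun ω => (p ω)⁻¹ :=
    (stronglyMeasurable_condExp (m := m)).measurable.inv.stronglyMeasurable
  have hinvC : ∀ᵐ ω ∂μ, ‖(p ω)⁻¹‖ ≤ ε⁻¹ := hp.mono fun _ h => norm_inv_le_inv_of_le hε h
  have hpinv : ∀ᵐ ω ∂μ, p ω * (p ω)⁻¹ = 1 :=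
    hp.mono fun _ h => mul_inv_cancel₀ (hε.trans_le h).ne'
  have hkτ : IntegrableOn (fun ω => k ω * (Y ω - τ ω)) B μ :=
    ((hY.sub hτi).bdd_mul (hk.mono hm).aestronglyMeasurable hkC).integrableOn
  have hinvY : IntegrableOn (fun ω => (p ω)⁻¹ * Y ω) B μ :=
    (hY.bdd_mul (hinv.mono hm).aestronglyMeasurable hinvC).integrableOn
  have hinvτ : IntegrableOn (fun ω => (p ω)⁻¹ * τ ω) B μ :=
    (hτi.bdd_mul (hinv.mono hm).aestronglyMeasurable hinvC).integrableOn
  calc ∫ ω, (p ω * k ω - 1) * (cexp m μ[|B] Y ω - τ ω) ∂μ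
      = ∫ ω, p ω * ((k ω - (p ω)⁻¹) * (cexp m μ[|B] Y ω - τ ω)) ∂μ := by
        refine integral_congr_ae (hpinv.mono fun ω h => ?_)
        dsimp only
        rw [← h]
        ring
    _ = ∫ ω in B, (k ω - (p ω)⁻¹) * (Y ω - τ ω) ∂μ :=
        integral_cprob_mul_mul_cexp_cond_sub hm hB (hk.sub hinv)
          ((hkC.and hinvC).mono fun _ h => (norm_sub_le _ _).trans (add_le_add h.1 h.2))
          hY hτ hτi
    _ = ∫ ω in B, k ω * (Y ω - τ ω) ∂μ
          - (∫ ω in B, (p ω)⁻¹ * Y ω ∂μ - ∫ ω in B, (p ω)⁻¹ * τ ω ∂μ) := by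
        rw [← integral_sub hinvY hinvτ,
          ← integral_sub hkτ (g := fun ω => (p ω)⁻¹ * Y ω - (p ω)⁻¹ * τ ω) (hinvY.sub hinvτ)]
        congr 1 with ω
        ring
    _ = ∫ ω in B, k ω * (Y ω - τ ω) ∂μ - ∫ ω, (Y ω - τ ω) ∂μ := by
        have hτB : ∫ ω in B, (p ω)⁻¹ * τ ω ∂μ = ∫ ω, τ ω ∂μ := by
          rw [← integral_cprob_mul hm hB (φ := fun ω => (p ω)⁻¹ * τ ω) (hinv.mul hτ) hinvτ]
          exact integral_congr_ae (hpinv.mono fun ω h => by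
            show p ω * ((p ω)⁻¹ * τ ω) = τ ω
            rw [← mul_assoc, h, one_mul])
        rw [setIntegral_inv_cprob_mul hm hB hε hp hY hYB, hτB, integral_sub hY hτi]

end ConditionalProbability

theorem integral_aipw_eq {Ω : Type*} [MeasurableSpace Ω] {μ : Measure Ω}
    {R T Y Y' l τ : Ω → ℝ} {t π : ℝ} (hR : Measurable R) (hT : Measurable T)
    (hRbin : ∀ ω, R ω = 0 ∨ R ω = 1) (hY : ∀ ω, T ω = t → Y ω = Y' ω) (hπ : π ≠ 0)
    (hl : ∀ ω, l ω ≠ 0) (hF : Integrable (fun ω => (l ω)⁻¹ * (Y' ω - τ ω)) μ)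
    (hτ : Integrable τ μ) :
    ∫ ω, (R ω * (if T ω = t then 1 else 0) * Y ω / (l ω * π)
        + (1 - R ω * (if T ω = t then 1 else 0) / (l ω * π)) * τ ω) ∂μ
      = π⁻¹ * ∫ ω in {ω | R ω = 1}, (if T ω = t then 1 else 0) * ((l ω)⁻¹ * (Y' ω - τ ω)) ∂μ
        + ∫ ω, τ ω ∂μ := by
  have hB : MeasurableSet {ω | R ω = 1} := hR (measurableSet_singleton 1)
  have hIF : Integrable
      (fun ω => (if T ω = t then (1 : ℝ) else 0) * ((l ω)⁻¹ * (Y' ω - τ ω))) μ :=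
    hF.bdd_mul (c := 1)
      (measurable_const.ite (hT (measurableSet_singleton t)) measurable_const).aestronglyMeasurable
      (ae_of_all _ fun ω => by split_ifs <;> simp)
  rw [← integral_indicator hB, ← integral_const_mul,
    ← integral_add ((hIF.indicator hB).const_mul _) hτ]
  refine integral_congr_ae (ae_of_all _ fun ω => ?_)
  rcases hRbin ω with hRω | hRω
  · simp [hRω]
  · have hω : ω ∈ {ω | R ω = 1} := hRω
    simp only [hRω, Set.indicator_of_mem hω]
    split_ifs with hTω
    · rw [hY ω hTω]
      field_simp [hl ω]
      ring
    · simp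

theorem stmt8_general
    {Ω 𝒳 : Type*} [MeasurableSpace Ω] [MeasurableSpace 𝒳]
    (P : Measure Ω) [IsProbabilityMeasure P]
    (X : Ω → 𝒳) (R T Y₁ Y₀ Y : Ω → ℝ) (Yt : ℝ → Ω → ℝ)
    (hX : Measurable X) (hR : Measurable R) (hT : Measurable T)
    (hY₁m : Measurable Y₁) (hY₀m : Measurable Y₀)
    (hRbin : ∀ ω, R ω = 0 ∨ R ω = 1)
    (hY₁2 : MemLp Y₁ 2 P) (hY₀2 : MemLp Y₀ 2 P)
    (hY : Y = fun ω => T ω * Y₁ ω + (1 - T ω) * Y₀ ω)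
    (hYt1 : Yt 1 = Y₁) (hYt0 : Yt 0 = Y₀)
    (ε : ℝ) (hε : 0 < ε)
    (hlam_pos : 0 < P {ω | R ω = 1})
    (hlamX : ∀ᵐ ω ∂P, ε ≤ cprob (sigmaX X) P {ω' | R ω' = 1} ω ∧
      cprob (sigmaX X) P {ω' | R ω' = 1} ω ≤ 1 - ε)
    (hpi : ∀ r ∈ ({0, 1} : Set ℝ), ∀ t ∈ ({0, 1} : Set ℝ), ∀ᵐ ω ∂P,
      ε ≤ cprob (sigmaX X) (ProbabilityTheory.cond P {ω' | R ω' = r}) {ω' | T ω' = t} ω ∧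
      cprob (sigmaX X) (ProbabilityTheory.cond P {ω' | R ω' = r}) {ω' | T ω' = t} ω ≤ 1 - ε)
    (hA1 : IndepFun T (fun ω => (Y₁ ω, Y₀ ω, X ω)) (ProbabilityTheory.cond P {ω | R ω = 1}))
    (hA3 : CondIndepFunGiven (sigmaX X) R (fun ω => (Y₁ ω, Y₀ ω)) P)
    (t : ℝ) (ht : t = 0 ∨ t = 1)
    (lamd : 𝒳 → ℝ) (hlamdm : Measurable lamd) (hlamdr : ∀ x, lamd x ∈ Set.Icc ε (1 - ε))
    (τd : 𝒳 → ℝ) (hτdm : Measurable τd) (hτdb : ∃ C, ∀ x, |τd x| ≤ C)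
    :
    (∫ ω, (R ω * (if T ω = t then (1 : ℝ) else 0) * Y ω / (lamd (X ω) * ((ProbabilityTheory.cond P {ω' | R ω' = 1}) {ω' | T ω' = t}).toReal)
      + (1 - R ω * (if T ω = t then (1 : ℝ) else 0) / (lamd (X ω) * ((ProbabilityTheory.cond P {ω' | R ω' = 1}) {ω' | T ω' = t}).toReal)) * τd (X ω)) ∂P) - (∫ ω', Yt t ω' ∂P)
      = ∫ ω, (cprob (sigmaX X) P {ω' | R ω' = 1} ω / lamd (X ω) - 1) * (cexp (sigmaX X) (ProbabilityTheory.cond P {ω' | R ω' = 1}) (Yt t) ω - τd (X ω)) ∂P := by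
  have hm : sigmaX X ≤ ‹MeasurableSpace Ω› := hX.comap_le
  have hXm : Measurable[sigmaX X] X := comap_measurable X
  set B := {ω' | R ω' = 1}
  have hB : MeasurableSet B := hR (measurableSet_singleton 1)
  have hπ : (P[|B] {ω' | T ω' = t}).toReal ≠ 0 := by
    have : IsProbabilityMeasure P[|B] := cond_isProbabilityMeasure hlam_pos.ne'
    refine (hε.trans_le (le_measureReal_of_ae_le_cprob hm (hT (measurableSet_singleton t)) ?_)).ne'
    exact cond_absolutelyContinuous.ae_le ((hpi 1 (by simp) t
      (by rcases ht with rfl | rfl <;> simp)).mono fun _ h => h.1)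
  obtain ⟨ζ, hζ, hYtζ, hYt, hYobs⟩ : ∃ ζ : ℝ × ℝ → ℝ, Measurable ζ ∧
      Yt t = ζ ∘ (fun ω => (Y₁ ω, Y₀ ω)) ∧ Integrable (Yt t) P ∧ ∀ ω, T ω = t → Y ω = Yt t ω := by
    rcases ht with rfl | rfl
    · exact ⟨Prod.snd, measurable_snd, hYt0, hYt0 ▸ hY₀2.integrable one_le_two,
        fun ω h => by simp [hY, h, hYt0]⟩
    · exact ⟨Prod.fst, measurable_fst, hYt1, hYt1 ▸ hY₁2.integrable one_le_two,
        fun ω h => by simp [hY, h, hYt1]⟩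
  obtain ⟨C, hC⟩ := hτdb
  have hτ : Integrable (fun ω => τd (X ω)) P :=
    (integrable_const C).mono' (hτdm.comp hX).aestronglyMeasurable (ae_of_all _ fun ω => hC _)
  have hkC : ∀ ω, ‖(lamd (X ω))⁻¹‖ ≤ ε⁻¹ := fun ω => norm_inv_le_inv_of_le hε (hlamdr _).1
  have hA1' : ∫ ω in B, (if T ω = t then 1 else 0) * ((lamd (X ω))⁻¹ * (Yt t ω - τd (X ω))) ∂P
      = (P[|B] {ω' | T ω' = t}).toReal * ∫ ω in B, (lamd (X ω))⁻¹ * (Yt t ω - τd (X ω)) ∂P := by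
    rw [hYtζ]
    exact setIntegral_ite_mul_comp_of_indepFun_cond hA1 hT (hY₁m.prodMk (hY₀m.prodMk hX))
      (g := fun w : ℝ × ℝ × 𝒳 => (lamd w.2.2)⁻¹ * (ζ (w.1, w.2.1) - τd w.2.2)) (by fun_prop) t
  have hYB : P[B.indicator (Yt t)|sigmaX X] =ᵐ[P] cprob (sigmaX X) P B * P[Yt t|sigmaX X] := by
    rw [hYtζ]
    exact condExp_indicator_comp_ae_eq hm hR (hY₁m.prodMk hY₀m) hA3 (measurableSet_singleton 1) hζ
      (hYtζ ▸ hYt)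
  rw [integral_aipw_eq hR hT hRbin hYobs hπ (fun ω => (hε.trans_le (hlamdr _).1).ne')
    ((hYt.sub hτ).bdd_mul (hlamdm.comp hX).inv.aestronglyMeasurable (ae_of_all _ hkC)) hτ, hA1',
    inv_mul_cancel_left₀ hπ]
  simp only [div_eq_mul_inv]
  rw [integral_cprob_mul_sub_one_mul_cexp_cond_sub hm hB hε (hlamX.mono fun _ h => h.1)
    (k := fun ω => (lamd (X ω))⁻¹) (τ := fun ω => τd (X ω))
    (hlamdm.comp hXm).inv.stronglyMeasurable (ae_of_all _ hkC) hYt hYB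
    (hτdm.comp hXm).stronglyMeasurable hτ, integral_sub hYt hτ]
  ring

theorem stmt8
    {Ω 𝒳 : Type*} [MeasurableSpace Ω] [MeasurableSpace 𝒳] [StandardBorelSpace 𝒳]
    (P : Measure Ω) [IsProbabilityMeasure P]
    (X : Ω → 𝒳) (R T Y₁ Y₀ Y : Ω → ℝ) (Yt : ℝ → Ω → ℝ)
    (hX : Measurable X) (hR : Measurable R) (hT : Measurable T)
    (hY₁m : Measurable Y₁) (hY₀m : Measurable Y₀)
    (hRbin : ∀ ω, R ω = 0 ∨ R ω = 1) (hTbin : ∀ ω, T ω = 0 ∨ T ω = 1)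
    (hY₁2 : MemLp Y₁ 2 P) (hY₀2 : MemLp Y₀ 2 P)
    (hY : Y = fun ω => T ω * Y₁ ω + (1 - T ω) * Y₀ ω)
    (hYt1 : Yt 1 = Y₁) (hYt0 : Yt 0 = Y₀)
    (ε : ℝ) (hε : 0 < ε)
    (hlam_pos : 0 < P {ω | R ω = 1}) (hlam_lt : P {ω | R ω = 1} < 1)
    (hlamX : ∀ᵐ ω ∂P, ε ≤ cprob (sigmaX X) P {ω' | R ω' = 1} ω ∧
      cprob (sigmaX X) P {ω' | R ω' = 1} ω ≤ 1 - ε)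
    (hpi : ∀ r ∈ ({0, 1} : Set ℝ), ∀ t ∈ ({0, 1} : Set ℝ), ∀ᵐ ω ∂P,
      ε ≤ cprob (sigmaX X) (ProbabilityTheory.cond P {ω' | R ω' = r}) {ω' | T ω' = t} ω ∧
      cprob (sigmaX X) (ProbabilityTheory.cond P {ω' | R ω' = r}) {ω' | T ω' = t} ω ≤ 1 - ε)
    (hA1 : IndepFun T (fun ω => (Y₁ ω, Y₀ ω, X ω)) (ProbabilityTheory.cond P {ω | R ω = 1}))
    (hA3 : CondIndepFunGiven (sigmaX X) R (fun ω => (Y₁ ω, Y₀ ω)) P)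
    (t : ℝ) (ht : t = 0 ∨ t = 1)
    (lamd : 𝒳 → ℝ) (hlamdm : Measurable lamd) (hlamdr : ∀ x, lamd x ∈ Set.Icc ε (1 - ε))
    (τd : 𝒳 → ℝ) (hτdm : Measurable τd) (hτdb : ∃ C, ∀ x, |τd x| ≤ C)
    :
    (∫ ω, (R ω * (if T ω = t then (1 : ℝ) else 0) * Y ω / (lamd (X ω) * ((ProbabilityTheory.cond P {ω' | R ω' = 1}) {ω' | T ω' = t}).toReal)
      + (1 - R ω * (if T ω = t then (1 : ℝ) else 0) / (lamd (X ω) * ((ProbabilityTheory.cond P {ω' | R ω' = 1}) {ω' | T ω' = t}).toReal)) * τd (X ω)) ∂P) - (∫ ω', Yt t ω' ∂P)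
      = ∫ ω, (cprob (sigmaX X) P {ω' | R ω' = 1} ω / lamd (X ω) - 1) * (cexp (sigmaX X) (ProbabilityTheory.cond P {ω' | R ω' = 1}) (Yt t) ω - τd (X ω)) ∂P :=
  stmt8_general P X R T Y₁ Y₀ Y Yt hX hR hT hY₁m hY₀m hRbin hY₁2 hY₀2 hY hYt1 hYt0 ε hε hlam_pos
    hlamX hpi hA1 hA3 t ht lamd hlamdm hlamdr τd hτdm hτdb
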